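/- For every natural number N there exists a finite connected bichromatic graph that is locally like W(F₄) and has more than N vertices; in particular, there exist infinitely many pairwise non-isomorphic finite connected bichromatic graphs that are locally like W(F₄). -/

import Mathlib

/-!
The orthogonality graph of the 24 positive roots of `F₄`, with short and long roots labelled as
such, is locally like `W(F₄)`; this is a finite check, certified by an explicit isomorphism of
each neighbourhood with `W(B₃)`. It carries an integral voltage that sums to zero around every
triangle but to `1` around a 4-cycle. Reduced mod `m`, its derived cover with fibre `ZMod m` is
again locally like `W(F₄)`, because a neighbourhood only sees triangles, where the voltage is
trivial; and it is connected, because the 4-cycle lifts to a path from one sheet to the next.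
This gives connected examples with `24 m` vertices.
-/

/-- The underlying simple graph of the bichromatic graph `W(B₃)` (equivalently of `W(C₃)`):
vertices the ordered pairs `(i,j) ∈ {1,2,3} × {1,2,3}`, distinct vertices `(i,j)` and `(k,l)`
being adjacent iff `{i,j} ∩ {k,l} = ∅` or `(k,l) = (j,i)`. -/
def graphB3 : SimpleGraph (Fin 3 × Fin 3) :=
  SimpleGraph.fromRel fun a b =>
    ({a.1, a.2} : Finset (Fin 3)) ∩ {b.1, b.2} = ∅ ∨ b = (a.2, a.1)

/-- The labeling of `W(B₃)`: the vertex `(i,j)` is short (label `true`) iff `i = j`.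
In `W(C₃)` the labels are interchanged. -/
def labelB3 (a : Fin 3 × Fin 3) : Bool := a.1 = a.2

/-- A bichromatic graph `(Γ, lab)` (where `lab v = true` means `v` is short and
`lab v = false` means `v` is long) is *locally like `W(F₄)`* if the neighborhood of every
short vertex, with its induced labeling, is isomorphic as a bichromatic graph to `W(B₃)`,
and the neighborhood of every long vertex is isomorphic as a bichromatic graph to `W(C₃)`. -/
def IsLocallyLikeWF4 {V : Type*} (Γ : SimpleGraph V) (lab : V → Bool) : Prop :=
  (∀ x : V, lab x = true →
      ∃ e : Γ.induce (Γ.neighborSet x) ≃g graphB3,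
        ∀ u : Γ.neighborSet x, lab u.1 = labelB3 (e u)) ∧
  (∀ x : V, lab x = false →
      ∃ e : Γ.induce (Γ.neighborSet x) ≃g graphB3,
        ∀ u : Γ.neighborSet x, lab u.1 = !labelB3 (e u))

open SimpleGraph Matrix Function

theorem isLocallyLikeWF4_iff {V : Type*} {Γ : SimpleGraph V} {lab : V → Bool} :
    IsLocallyLikeWF4 Γ lab ↔ ∀ x, ∃ e : Γ.induce (Γ.neighborSet x) ≃g graphB3,
      ∀ u : Γ.neighborSet x, lab u.1 = if lab x then labelB3 (e u) else !labelB3 (e u) := by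
  constructor
  · rintro ⟨hshort, hlong⟩ x
    cases hx : lab x
    · simpa using hlong x hx
    · simpa using hshort x hx
  · intro h
    exact ⟨fun x hx => by simpa [hx] using h x, fun x hx => by simpa [hx] using h x⟩

namespace SimpleGraph

variable {V W : Type*}

def IsLocalIso (G : SimpleGraph V) (H : SimpleGraph W) (f : V → W) : Prop :=
  ∀ x, ∃ e : G.induce (G.neighborSet x) ≃g H.induce (H.neighborSet (f x)),
    ∀ u, (e u : W) = f u

theorem Iso.isLocalIso {G : SimpleGraph V} {H : SimpleGraph W} (ι : G ≃g H) :
    IsLocalIso G H ι :=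
  fun x => ⟨⟨ι.mapNeighborSet x, ι.map_rel_iff⟩, fun _ => rfl⟩

section VoltageCover

variable {A : Type*} [AddCommGroup A] (G : SimpleGraph V) (g : V → V → A)
  (hg : ∀ u v, g v u = -g u v)

def voltageCover : SimpleGraph (V × A) where
  Adj x y := G.Adj x.1 y.1 ∧ y.2 = x.2 + g x.1 y.1
  symm := ⟨fun x y h => ⟨h.1.symm, by rw [h.2, hg]; abel⟩⟩
  loopless := ⟨fun x h => G.loopless.irrefl x.1 h.1⟩

variable {G g hg}

theorem voltageCover_adj {x y : V × A} :
    (voltageCover G g hg).Adj x y ↔ G.Adj x.1 y.1 ∧ y.2 = x.2 + g x.1 y.1 :=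
  .rfl

theorem exists_reachable_voltageCover {u v : V} (h : G.Reachable u v) (a : A) :
    ∃ b, (voltageCover G g hg).Reachable (u, a) (v, b) := by
  obtain ⟨p⟩ := h
  induction p generalizing a with
  | nil => exact ⟨a, .rfl⟩
  | cons huw _ ih =>
    obtain ⟨b, hb⟩ := ih (a + g _ _)
    exact ⟨b, (voltageCover_adj.2 ⟨huw, rfl⟩).reachable.trans hb⟩

theorem Reachable.voltageCover_add {x y : V × A} (h : (voltageCover G g hg).Reachable x y)
    (c : A) : (voltageCover G g hg).Reachable (x.1, x.2 + c) (y.1, y.2 + c) :=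
  h.map (⟨fun z => (z.1, z.2 + c), fun hzw => ⟨hzw.1, by simp [hzw.2, add_right_comm]⟩⟩ :
    voltageCover G g hg →g voltageCover G g hg)

theorem voltageCover_connected (hG : G.Preconnected) (x₀ : V)
    (hfiber : ∀ c, (voltageCover G g hg).Reachable (x₀, 0) (x₀, c)) :
    (voltageCover G g hg).Connected := by
  refine (connected_iff_exists_forall_reachable _).2 ⟨(x₀, 0), fun y => ?_⟩
  obtain ⟨c, hc⟩ := exists_reachable_voltageCover (hg := hg) (hG y.1 x₀) y.2
  exact (hfiber c).trans hc.symm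

theorem isLocalIso_voltageCover_fst
    (hcoc : ∀ u v w, G.Adj u v → G.Adj v w → G.Adj u w → g u v + g v w = g u w) :
    IsLocalIso (voltageCover G g hg) G Prod.fst := by
  intro x
  let φ : (voltageCover G g hg).neighborSet x ≃ G.neighborSet x.1 :=
    { toFun := fun y => ⟨y.1.1, y.2.1⟩
      invFun := fun w => ⟨(w.1, x.2 + g x.1 w.1), w.2, rfl⟩
      left_inv := by
        rintro ⟨⟨w, b⟩, -, hb⟩
        dsimp only at hb
        subst hb
        rfl
      right_inv := fun w => rfl }
  refine ⟨⟨φ, ?_⟩, fun _ => rfl⟩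
  rintro ⟨⟨w, b⟩, hw, hb⟩ ⟨⟨w', b'⟩, hw', hb'⟩
  dsimp only at hw hw' hb hb'
  subst hb hb'
  change G.Adj w w' ↔ G.Adj w w' ∧ x.2 + g x.1 w' = x.2 + g x.1 w + g w w'
  exact ⟨fun h => ⟨h, by rw [add_assoc, hcoc _ _ _ hw h hw']⟩, And.left⟩

end VoltageCover

theorem voltageCover_reachable_zmod {G : SimpleGraph V} {m : ℕ}
    {g : V → V → ZMod m} {hg : ∀ u v, g v u = -g u v} {x₀ : V}
    (h : (voltageCover G g hg).Reachable (x₀, 0) (x₀, 1)) (c : ZMod m) :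
    (voltageCover G g hg).Reachable (x₀, 0) (x₀, c) := by
  obtain ⟨k, rfl⟩ := ZMod.intCast_surjective c
  induction k using Int.induction_on with
  | zero => simp
  | succ k ih =>
    have step := h.voltageCover_add ((k : ℤ) : ZMod m)
    dsimp only at step
    rw [zero_add, add_comm] at step
    exact_mod_cast ih.trans step
  | pred k ih =>
    have step := (h.voltageCover_add ((-k - 1 : ℤ) : ZMod m)).symm
    dsimp only at step
    rw [zero_add, Int.cast_sub, Int.cast_one, add_sub_cancel] at step
    exact_mod_cast ih.trans step

end SimpleGraph

theorem IsLocallyLikeWF4.comap {V W : Type*} {G : SimpleGraph V} {H : SimpleGraph W}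
    {lab : W → Bool} (h : IsLocallyLikeWF4 H lab) {f : V → W} (hf : IsLocalIso G H f) :
    IsLocallyLikeWF4 G (lab ∘ f) := by
  rw [isLocallyLikeWF4_iff] at h ⊢
  intro x
  obtain ⟨e, he⟩ := hf x
  obtain ⟨e', he'⟩ := h (f x)
  exact ⟨e.trans e', fun u => by simpa [he] using he' (e u)⟩

/-- The 24 positive roots of `F₄`, with coordinates doubled to make them integral: the short
roots `eᵢ` and `(±e₁ ± e₂ ± e₃ ± e₄)/2` have squared length 4, the long roots `eᵢ ± eⱼ` 8. -/
def f4Root : Fin 24 → Fin 4 → ℤ :=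
  ![![2, 0, 0, 0], ![0, 2, 0, 0], ![0, 0, 2, 0], ![0, 0, 0, 2],
    ![2, 2, 0, 0], ![2, -2, 0, 0], ![2, 0, 2, 0], ![2, 0, -2, 0],
    ![2, 0, 0, 2], ![2, 0, 0, -2], ![0, 2, 2, 0], ![0, 2, -2, 0],
    ![0, 2, 0, 2], ![0, 2, 0, -2], ![0, 0, 2, 2], ![0, 0, 2, -2],
    ![1, 1, 1, 1], ![1, 1, 1, -1], ![1, 1, -1, 1], ![1, 1, -1, -1],
    ![1, -1, 1, 1], ![1, -1, 1, -1], ![1, -1, -1, 1], ![1, -1, -1, -1]]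

def f4Graph : SimpleGraph (Fin 24) where
  Adj i j := f4Root i ⬝ᵥ f4Root j = 0
  symm := ⟨fun i j (h : f4Root i ⬝ᵥ f4Root j = 0) => by rwa [dotProduct_comm]⟩
  loopless := ⟨by decide⟩

instance : DecidableRel f4Graph.Adj :=
  fun i j => inferInstanceAs (Decidable (f4Root i ⬝ᵥ f4Root j = 0))

def f4IsShort (i : Fin 24) : Bool := f4Root i ⬝ᵥ f4Root i = 4

instance : DecidableRel graphB3.Adj :=
  fun a b => inferInstanceAs (Decidable (a ≠ b ∧ (_ ∨ _)))

/-- `f4LinkTable v i j` is the neighbour of `v` that plays the role of the vertex `(i, j)` of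
`W(B₃)` (of `W(C₃)` if `v` is long). -/
def f4LinkTable : Fin 24 → Fin 3 → Fin 3 → Fin 24 :=
  ![![![1, 10, 12], ![11, 2, 14], ![13, 15, 3]],
    ![![0, 6, 8], ![7, 2, 14], ![9, 15, 3]],
    ![![0, 4, 8], ![5, 1, 12], ![9, 13, 3]],
    ![![0, 4, 6], ![5, 1, 10], ![7, 11, 2]],
    ![![14, 2, 20], ![3, 15, 21], ![23, 22, 5]],
    ![![14, 2, 16], ![3, 15, 17], ![19, 18, 4]],
    ![![12, 1, 18], ![3, 13, 19], ![23, 22, 7]],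
    ![![12, 1, 16], ![3, 13, 17], ![21, 20, 6]],
    ![![10, 1, 17], ![2, 11, 19], ![23, 21, 9]],
    ![![10, 1, 16], ![2, 11, 18], ![22, 20, 8]],
    ![![8, 0, 18], ![3, 9, 19], ![20, 21, 11]],
    ![![8, 0, 16], ![3, 9, 17], ![22, 23, 10]],
    ![![6, 0, 17], ![2, 7, 19], ![20, 22, 13]],
    ![![6, 0, 16], ![2, 7, 18], ![21, 23, 12]],
    ![![4, 0, 17], ![1, 5, 21], ![18, 22, 15]],
    ![![4, 0, 16], ![1, 5, 20], ![19, 23, 14]],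
    ![![22, 5, 7], ![15, 21, 9], ![13, 11, 19]],
    ![![23, 5, 7], ![14, 20, 8], ![12, 11, 18]],
    ![![20, 5, 6], ![14, 23, 9], ![13, 10, 17]],
    ![![21, 5, 6], ![15, 22, 8], ![12, 10, 16]],
    ![![18, 4, 7], ![15, 17, 9], ![12, 10, 23]],
    ![![19, 4, 7], ![14, 16, 8], ![13, 10, 22]],
    ![![16, 4, 6], ![14, 19, 9], ![12, 11, 21]],
    ![![17, 4, 6], ![15, 18, 8], ![13, 11, 20]]]

def f4Link (v : Fin 24) (p : Fin 3 × Fin 3) : Fin 24 := f4LinkTable v p.1 p.2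

theorem f4Link_adj : ∀ v p, f4Graph.Adj v (f4Link v p) := by decide

theorem f4Link_injective : ∀ v, Injective (f4Link v) := by decide

theorem exists_f4Link_eq_of_adj : ∀ v w, f4Graph.Adj v w → ∃ p, f4Link v p = w := by decide

theorem f4Link_adj_f4Link_iff :
    ∀ v p q, f4Graph.Adj (f4Link v p) (f4Link v q) ↔ graphB3.Adj p q := by decide

theorem f4IsShort_f4Link :
    ∀ v p, f4IsShort (f4Link v p) = if f4IsShort v then labelB3 p else !labelB3 p := by decide

theorem isLocallyLikeWF4_f4Graph : IsLocallyLikeWF4 f4Graph f4IsShort := by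
  refine isLocallyLikeWF4_iff.2 fun v => ?_
  let φ : Fin 3 × Fin 3 ≃ f4Graph.neighborSet v :=
    .ofBijective (fun p => ⟨f4Link v p, f4Link_adj v p⟩)
      ⟨fun p q h => f4Link_injective v (congrArg Subtype.val h),
        fun w => (exists_f4Link_eq_of_adj v w w.2).imp fun _ hp => Subtype.ext hp⟩
  let e : graphB3 ≃g f4Graph.induce (f4Graph.neighborSet v) :=
    ⟨φ, fun {p q} => f4Link_adj_f4Link_iff v p q⟩
  refine ⟨e.symm, fun u => ?_⟩
  obtain ⟨p, rfl⟩ := e.surjective u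
  rw [RelIso.symm_apply_apply]
  exact f4IsShort_f4Link v p

theorem f4Graph_preconnected : f4Graph.Preconnected := by
  have h : ∀ w, ∃ u, f4Graph.Adj 0 u ∧ f4Graph.Adj u w := by decide
  have hreach (w : Fin 24) : f4Graph.Reachable 0 w := by
    obtain ⟨u, h0u, huw⟩ := h w
    exact h0u.reachable.trans huw.reachable
  exact fun v w => (hreach v).symm.trans (hreach w)

/-- The darts from `e₁` to `e₃, e₄, e₂ ± e₃, e₂ ± e₄` and from `e₂` to `e₃, e₄, e₁ ± e₃, e₁ ± e₄`,
on which `f4Voltage` is `1`. -/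
def f4VoltageSupport : Finset (Fin 24 × Fin 24) :=
  {(0, 2), (0, 3), (0, 10), (0, 11), (0, 12), (0, 13),
   (1, 2), (1, 3), (1, 6), (1, 7), (1, 8), (1, 9)}

def f4Voltage (u v : Fin 24) : ℤ :=
  (if (u, v) ∈ f4VoltageSupport then 1 else 0) - if (v, u) ∈ f4VoltageSupport then 1 else 0

theorem f4Voltage_swap (u v : Fin 24) : f4Voltage v u = -f4Voltage u v := by
  simp only [f4Voltage]
  ring

theorem f4Voltage_add_f4Voltage_of_adj {u v w : Fin 24} (huv : f4Graph.Adj u v)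
    (hvw : f4Graph.Adj v w) (huw : f4Graph.Adj u w) :
    f4Voltage u v + f4Voltage v w = f4Voltage u w := by
  have hlink : ∀ u p q, f4Graph.Adj (f4Link u p) (f4Link u q) →
      f4Voltage u (f4Link u p) + f4Voltage (f4Link u p) (f4Link u q) =
        f4Voltage u (f4Link u q) := by decide
  obtain ⟨p, rfl⟩ := exists_f4Link_eq_of_adj u v huv
  obtain ⟨q, rfl⟩ := exists_f4Link_eq_of_adj u w huw
  exact hlink u p q hvw

def f4Cover (m : ℕ) : SimpleGraph (Fin 24 × ZMod m) :=
  voltageCover f4Graph (fun u v => (f4Voltage u v : ZMod m))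
    fun u v => by rw [f4Voltage_swap, Int.cast_neg]

theorem isLocallyLikeWF4_f4Cover (m : ℕ) :
    IsLocallyLikeWF4 (f4Cover m) (f4IsShort ∘ Prod.fst) :=
  isLocallyLikeWF4_f4Graph.comap <| isLocalIso_voltageCover_fst fun _ _ _ huv hvw huw => by
    rw [← f4Voltage_add_f4Voltage_of_adj huv hvw huw, Int.cast_add]

/-- The 4-cycle `e₁, e₃, e₁ + e₂, e₃ + e₄` has voltage `1`. -/
theorem f4Cover_reachable_zero_one (m : ℕ) : (f4Cover m).Reachable (0, 0) (0, 1) := by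
  have step : ∀ (u v : Fin 24) (a : ZMod m), f4Graph.Adj u v →
      (f4Cover m).Reachable (u, a) (v, a + f4Voltage u v) :=
    fun u v a h => (voltageCover_adj.2 ⟨h, rfl⟩).reachable
  have h02 := step 0 2 0 (by decide)
  have h24 := step 2 4 1 (by decide)
  have h414 := step 4 14 1 (by decide)
  have h140 := step 14 0 1 (by decide)
  simp only [show f4Voltage 0 2 = 1 ∧ f4Voltage 2 4 = 0 ∧ f4Voltage 4 14 = 0 ∧
    f4Voltage 14 0 = 0 by decide, Int.cast_one, Int.cast_zero, zero_add, add_zero]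
    at h02 h24 h414 h140
  exact h02.trans (h24.trans (h414.trans h140))

theorem f4Cover_connected (m : ℕ) : (f4Cover m).Connected :=
  voltageCover_connected f4Graph_preconnected 0
    (voltageCover_reachable_zmod (f4Cover_reachable_zero_one m))

/-- For every natural number `N` there exists a finite connected bichromatic
graph that is locally like `W(F₄)` and has more than `N` vertices; in particular, there are
infinitely many pairwise non-isomorphic finite connected bichromatic graphs locally like
`W(F₄)`. -/
theorem stmt_18 :
    ∀ N : ℕ, ∃ (m : ℕ) (Γ : SimpleGraph (Fin m)) (lab : Fin m → Bool),
      N < m ∧ Γ.Connected ∧ IsLocallyLikeWF4 Γ lab := by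
  intro N
  have hcard : Fintype.card (Fin 24 × ZMod (N + 1)) = 24 * (N + 1) := by simp
  let ι := ((f4Cover (N + 1)).overFinIso hcard).symm
  exact ⟨_, _, _, by omega, ι.connected_iff.2 (f4Cover_connected _),
    (isLocallyLikeWF4_f4Cover _).comap ι.isLocalIso⟩
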